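/- arXiv:1112.5772 — 4 statements merged into one kernel-verified Lean document; each statement's English description precedes it below -/
import Mathlib

section
/- If μ is a cardinal with cofinality cf(μ) = λ where λ is a regular infinite cardinal, then the strong polarized relation fails: there exists a coloring c : μ × λ → 2 such that for all A ⊆ μ with |A| = μ and B ⊆ λ with |B| = λ, the restriction of c to A × B is not constant. -/
open Cardinal Set

noncomputable section

/-- The canonical type of cardinality `c`: the order type of `c.ord`. -/
abbrev OT (c : Cardinal) : Type _ := c.ord.ToType

/-- `S` splits `B` (as subsets of a set of size `lam`). -/
def Splits (lam : Cardinal) (S B : Set (OT lam)) : Prop :=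
  #(↥(S ∩ B)) = lam ∧ #(↥(B \ S)) = lam

/-- A splitting family on `lam`. -/
def IsSplittingFamily (lam : Cardinal) (F : Set (Set (OT lam))) : Prop :=
  ∀ B : Set (OT lam), #B = lam → ∃ S ∈ F, Splits lam S B

/-- The splitting number `𝔰_lam`. -/
def splittingNumber (lam : Cardinal) : Cardinal :=
  sInf { κ | ∃ F : Set (Set (OT lam)), #F = κ ∧ IsSplittingFamily lam F }

/-- An unreaped family on `lam`. -/
def IsUnreaped (lam : Cardinal) (F : Set (Set (OT lam))) : Prop :=
  (∀ A ∈ F, #A = lam) ∧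
  ¬ ∃ S : Set (OT lam), #S = lam ∧ ∀ A ∈ F, Splits lam S A

/-- The reaping number `𝔯_lam`. -/
def reapingNumber (lam : Cardinal) : Cardinal :=
  sInf { κ | ∃ F : Set (Set (OT lam)), #F = κ ∧ IsUnreaped lam F }

/-- The strong polarized relation `(μ, lam) → (μ, lam)^{1,1}_2`. -/
def StrongPolarized (μ lam : Cardinal) : Prop :=
  ∀ c : OT μ → OT lam → Fin 2,
    ∃ (A : Set (OT μ)) (B : Set (OT lam)) (i : Fin 2),
      #A = μ ∧ #B = lam ∧ ∀ α ∈ A, ∀ β ∈ B, c α β = i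

end

/-!
Enumerate a cofinal subset of `μ` in order type `λ = cf μ` and let `ξ α < λ` index an element
of it above `α`. Every `ξ⁻¹' [0, γ]` is then a union of fewer than `cf μ` sets of size `< μ`,
so it has size `< μ`: these are the paper's `⋃_{δ ≤ γ} A_δ`. Hence `ξ` is unbounded on any
`A` of size `μ`, just as any `B` of size `λ` is unbounded in `λ`. For the colouring
`c α β = 0 ↔ β ≤ ξ α`, pick `β₀ ∈ B`, then `α ∈ A` with `β₀ < ξ α`, then `β₁ ∈ B` above
`ξ α`: the pairs `(α, β₀)` and `(α, β₁)` get different colours.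
-/

namespace Cardinal

universe u

theorem mk_Iic_toType_ord_lt {c : Cardinal} (hc : ℵ₀ ≤ c) (x : c.ord.ToType) :
    #(Iic x) < c := by
  simpa using mk_Iic_lt x (by simp) (by simpa using hc)

theorem mk_iUnion_lt_of_lt_cof_ord {ι α : Type u} {t : ι → Set α} {c : Cardinal.{u}}
    (hc : ℵ₀ ≤ c) (hι : #ι < c.ord.cof) (ht : ∀ i, #(t i) < c) : #(⋃ i, t i) < c :=
  mk_iUnion_le_sum_mk.trans_lt <| (sum_le_mk_mul_iSup _).trans_lt <|
    mul_lt_of_lt hc (hι.trans_le (Ordinal.cof_ord_le c)) (iSup_lt_of_lt_cof_ord hι ht)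

end Cardinal

theorem exists_lt_apply_of_mk_preimage_Iic_lt {α β : Type*} [LinearOrder β] {f : α → β}
    {κ : Cardinal} (hf : ∀ γ, #(f ⁻¹' Iic γ) < κ) {A : Set α} (hA : κ ≤ #A) (γ : β) :
    ∃ a ∈ A, γ < f a := by
  by_contra! h
  exact ((mk_le_mk_of_subset h).trans_lt (hf γ)).not_ge hA

theorem exists_forall_mk_preimage_Iic_lt {μ lam : Cardinal} (hlam : ℵ₀ ≤ lam)
    (hcf : μ.ord.cof = lam) : ∃ ξ : OT μ → OT lam, ∀ γ, #(ξ ⁻¹' Iic γ) < μ := by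
  have hμ : ℵ₀ ≤ μ := hlam.trans (hcf ▸ Ordinal.cof_ord_le μ)
  obtain ⟨S, hS, hScard⟩ := Order.exists_cof_eq (OT μ)
  rw [Ordinal.cof_toType, hcf] at hScard
  obtain ⟨e⟩ : Nonempty (OT lam ≃ S) := by
    rw [← Cardinal.eq, mk_ord_toType, hScard]
  choose s hsS hs using hS
  let ξ : OT μ → OT lam := fun α => e.symm ⟨s α, hsS α⟩
  refine ⟨ξ, fun γ => ?_⟩
  have hsub : ξ ⁻¹' Iic γ ⊆ ⋃ δ : Iic γ, Iic (e δ : OT μ) :=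
    fun α hα => mem_iUnion.2 ⟨⟨ξ α, hα⟩, by simpa [ξ] using hs α⟩
  refine (mk_le_mk_of_subset hsub).trans_lt (mk_iUnion_lt_of_lt_cof_ord hμ ?_ ?_)
  · rw [hcf]
    exact mk_Iic_toType_ord_lt hlam γ
  · exact fun δ => mk_Iic_toType_ord_lt hμ _

/-- if `cf μ = lam` with `lam` regular infinite, the strong polarized
relation fails: some coloring has no monochromatic full-size rectangle. -/
theorem stmt0 (μ lam : Cardinal) (hlam : lam.IsRegular) (hcf : μ.ord.cof = lam) :
    ∃ c : OT μ → OT lam → Fin 2,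
      ∀ (A : Set (OT μ)) (B : Set (OT lam)), #A = μ → #B = lam →
        ¬ ∃ i : Fin 2, ∀ α ∈ A, ∀ β ∈ B, c α β = i := by
  obtain ⟨ξ, hξ⟩ := exists_forall_mk_preimage_Iic_lt hlam.aleph0_le hcf
  refine ⟨fun α β => if β ≤ ξ α then 0 else 1, ?_⟩
  rintro A B hA hB ⟨i, hi⟩
  obtain ⟨β₀, hβ₀⟩ : B.Nonempty := by
    rw [← nonempty_coe_sort, ← mk_ne_zero_iff, hB]
    exact hlam.pos.ne'
  obtain ⟨α, hα, hβ₀α⟩ := exists_lt_apply_of_mk_preimage_Iic_lt hξ hA.ge β₀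
  obtain ⟨β₁, hβ₁, hαβ₁ : ξ α < β₁⟩ := exists_lt_apply_of_mk_preimage_Iic_lt (f := id)
    (mk_Iic_toType_ord_lt hlam.aleph0_le) hB.ge (ξ α)
  have h₀ : 0 = i := by simpa [hβ₀α.le] using hi α hα β₀ hβ₀
  have h₁ : 1 = i := by simpa [not_le.2 hαβ₁] using hi α hα β₁ hβ₁
  exact absurd (h₀.trans h₁.symm) (by decide)
end

section
/- Let λ be a regular infinite cardinal and let μ be a cardinal with λ < μ < 𝔰_λ and cf(μ) ≠ λ. Then the strong polarized relation (μ,λ) → (μ,λ)^{1,1}_2 holds: for every coloring c : μ × λ → 2 there exist H₀ ⊆ μ with |H₀| = μ and H₁ ⊆ λ with |H₁| = λ such that c is constant on H₀ × H₁. -/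
open Cardinal Set

/-!
The `μ` rows `{β | c α β = 1}` are fewer than `𝔰_λ`, so some `B ∈ [λ]^λ` is split by none of them:
each row `c α` is constant on `B` up to a set of size `< λ`, which by regularity of `λ` lies below
some `bound α < λ`. Fix a colour taken by `μ` rows. The sets `{α | bound α ≤ ξ}`, `ξ < λ`, increase
and exhaust those rows; since `cf μ ≠ λ`, one of them already has size `μ`, and together with the
part of `B` above `ξ` it is homogeneous.
-/

universe u v

theorem Cardinal.mk_sdiff_eq_of_mk_lt {α : Type u} {s t : Set α} (hs : ℵ₀ ≤ #s) (ht : #t < #s) :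
    #(s \ t : Set α) = #s :=
  (mk_le_mk_of_subset sdiff_subset).antisymm <| not_lt.1 fun h =>
    (le_mk_sdiff_add_mk s t).not_gt (add_lt_of_lt hs h ht)

theorem Cardinal.exists_mk_preimage_singleton_eq_of_finite {β : Type u} {α : Type v} [Finite α]
    (f : β → α) (hβ : ℵ₀ ≤ #β) : ∃ a, #(f ⁻¹' {a}) = #β := by
  let e := Finite.equivFin α
  obtain ⟨⟨k⟩, hk⟩ := infinite_pigeonhole (ULift.up.{u} ∘ e ∘ f) hβ <|
    (lt_aleph0_of_finite _).trans_le <|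
      Ordinal.aleph0_le_cof_iff.2 <| Ordinal.one_lt_cof_iff.2 (isSuccLimit_ord hβ)
  refine ⟨e.symm k, ?_⟩
  rw [← hk]
  congr 2
  ext b
  simp [Equiv.eq_symm_apply]

theorem exists_forall_lt_of_mk_lt_cof {α : Type u} [LinearOrder α] {s : Set α}
    (hs : #s < Order.cof α) : ∃ x, ∀ y ∈ s, y < x :=
  not_isCofinal_iff.1 fun h => (Order.cof_le h).not_gt hs

theorem Cardinal.IsRegular.cof_OT {lam : Cardinal.{u}} (hlam : lam.IsRegular) :
    Order.cof (OT lam) = lam := by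
  rw [Ordinal.cof_toType, hlam.cof_ord]

theorem not_isSplittingFamily_of_mk_lt {lam : Cardinal.{u}} {F : Set (Set (OT lam))}
    (hF : #F < splittingNumber lam) : ¬ IsSplittingFamily lam F :=
  fun h => (csInf_le' (s := { κ | ∃ F : Set (Set (OT lam)), #F = κ ∧ IsSplittingFamily lam F })
    ⟨F, rfl, h⟩).not_gt hF

theorem exists_mk_sdiff_fiber_lt_of_not_splits {lam : Cardinal.{u}} {B : Set (OT lam)}
    (hB : #B = lam) (f : OT lam → Fin 2) (h : ¬ Splits lam {β | f β = 1} B) :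
    ∃ i, #(B \ {β | f β = i} : Set (OT lam)) < lam := by
  by_cases h1 : #({β | f β = 1} ∩ B : Set (OT lam)) = lam
  · exact ⟨1, ((mk_le_mk_of_subset sdiff_subset).trans_eq hB).lt_of_ne fun h2 => h ⟨h1, h2⟩⟩
  · have hfiber : B \ {β | f β = 0} = {β | f β = 1} ∩ B := by
      ext β
      have : ¬ f β = 0 ↔ f β = 1 := by generalize f β = x; revert x; decide
      simp only [mem_sdiff, mem_inter_iff, mem_ofPred_eq, this, and_comm]
    exact ⟨0, hfiber ▸ ((mk_le_mk_of_subset inter_subset_right).trans_eq hB).lt_of_ne h1⟩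

theorem isLUB_range_mk_inter_preimage_Iic {lam : Cardinal.{u}} {β : Type u} {s : Set β}
    (hs : ℵ₀ ≤ #s) (hlam : lam < #s) (g : β → OT lam) :
    IsLUB (range fun ξ => #(s ∩ g ⁻¹' Iic ξ : Set β)) #s := by
  refine ⟨forall_mem_range.2 fun ξ => mk_le_mk_of_subset inter_subset_left,
    fun θ hθ => not_lt.1 fun hθs => ?_⟩
  have hcover : s ⊆ ⋃ ξ, s ∩ g ⁻¹' Iic ξ := fun x hx => mem_iUnion.2 ⟨g x, hx, le_refl (g x)⟩
  have : #s ≤ lam * θ := calc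
    #s ≤ #(⋃ ξ, s ∩ g ⁻¹' Iic ξ : Set β) := mk_le_mk_of_subset hcover
    _ ≤ #(OT lam) * ⨆ ξ, #(s ∩ g ⁻¹' Iic ξ : Set β) := mk_iUnion_le _
    _ ≤ lam * θ := by
      rw [mk_ord_toType]
      gcongr
      exact ciSup_le' fun ξ => hθ ⟨ξ, rfl⟩
  exact this.not_gt (mul_lt_of_lt hs hlam hθs)

theorem Monotone.mem_range_of_isLUB_of_cof_ne {lam μ : Cardinal.{u}} (hlam : lam.IsRegular)
    (hlamμ : lam < μ) (hcf : μ.ord.cof ≠ lam) {f : OT lam → Cardinal.{u}} (hf : Monotone f)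
    (hμ : IsLUB (range f) μ) : μ ∈ range f := by
  by_contra hnot
  have hlt : ∀ ξ, f ξ < μ := fun ξ => (hμ.1 ⟨ξ, rfl⟩).lt_of_ne fun h => hnot ⟨ξ, h⟩
  -- If `cf μ < λ`, the witnesses for a cofinal subset of `μ` are bounded below `λ`; if `cf μ > λ`,
  -- a supremum of `λ` cardinals below `μ` stays below `μ`.
  rcases hcf.lt_or_gt with hcf | hcf
  · have hμ0 : ℵ₀ ≤ μ := hlam.aleph0_le.trans hlamμ.le
    obtain ⟨s, hs, hs_card⟩ := Order.exists_cof_eq (OT μ)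
    rw [Ordinal.cof_toType] at hs_card
    have hwitness : ∀ x : OT μ, ∃ ξ, #(Iic x) < f ξ := fun x => by
      obtain ⟨_, ⟨ξ, rfl⟩, h⟩ := (lt_isLUB_iff hμ).1 <| by
        simpa using mk_Iic_lt x (by simp) (by simpa using hμ0)
      exact ⟨ξ, h⟩
    choose ξ hξ using hwitness
    obtain ⟨ξmax, hξmax⟩ := exists_forall_lt_of_mk_lt_cof (s := ξ '' s)
      (by rw [hlam.cof_OT]; exact mk_image_le.trans_lt (hs_card ▸ hcf))
    have hcover : μ ≤ #s * f ξmax := calc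
      μ = #(⋃ x ∈ s, Iic x) := by
        rw [isCofinal_iff_iUnion_Iic_eq_univ.1 hs, mk_univ, mk_ord_toType]
      _ ≤ #s * ⨆ x : s, #(Iic x.1) := mk_biUnion_le _ _
      _ ≤ #s * f ξmax := by
        gcongr
        exact ciSup_le' fun x => ((hξ x).trans_le (hf (hξmax _ (mem_image_of_mem _ x.2)).le)).le
    exact hcover.not_gt (mul_lt_of_lt hμ0 (hs_card ▸ hcf.trans hlamμ) (hlt ξmax))
  · have : Nonempty (OT lam) := by
      rw [Ordinal.nonempty_toType_iff, Ne, ord_eq_zero]; exact hlam.pos.ne'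
    exact (iSup_lt_of_lt_cof_ord (by rwa [mk_ord_toType]) hlt).ne hμ.ciSup_eq

theorem exists_mk_inter_preimage_Iic_eq {lam : Cardinal.{u}} (hlam : lam.IsRegular) {β : Type u}
    {s : Set β} (hs : lam < #s) (hcf : (#s).ord.cof ≠ lam) (g : β → OT lam) :
    ∃ ξ, #(s ∩ g ⁻¹' Iic ξ : Set β) = #s :=
  Monotone.mem_range_of_isLUB_of_cof_ne hlam hs hcf
    (fun _ _ h => mk_le_mk_of_subset <| inter_subset_inter_right _ <|
      preimage_mono (Iic_subset_Iic.2 h))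
    (isLUB_range_mk_inter_preimage_Iic (hlam.aleph0_le.trans hs.le) hs g)

/-- downward positive relation below the splitting number. -/
theorem stmt1 (lam μ : Cardinal) (hlam : lam.IsRegular)
    (h1 : lam < μ) (h2 : μ < splittingNumber lam) (hcf : μ.ord.cof ≠ lam) :
    StrongPolarized μ lam := by
  intro c
  obtain ⟨B, hB, hB_unsplit⟩ :
      ∃ B : Set (OT lam), #B = lam ∧ ∀ α, ¬ Splits lam {β | c α β = 1} B := by
    by_contra! hsplit
    refine not_isSplittingFamily_of_mk_lt (F := range fun α => {β | c α β = 1})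
      (mk_range_le.trans_lt (by rwa [mk_ord_toType])) fun B hB => ?_
    obtain ⟨α, hα⟩ := hsplit B hB
    exact ⟨_, ⟨α, rfl⟩, hα⟩
  choose col hcol using fun α => exists_mk_sdiff_fiber_lt_of_not_splits hB (c α) (hB_unsplit α)
  choose bound hbound using fun α =>
    exists_forall_lt_of_mk_lt_cof (by rw [hlam.cof_OT]; exact hcol α)
  have hμ : ℵ₀ ≤ #(OT μ) := by rw [mk_ord_toType]; exact hlam.aleph0_le.trans h1.le
  obtain ⟨i, hi⟩ := exists_mk_preimage_singleton_eq_of_finite col hμ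
  rw [mk_ord_toType] at hi
  obtain ⟨ξ, hξ⟩ :=
    exists_mk_inter_preimage_Iic_eq hlam (s := col ⁻¹' {i}) (by rwa [hi]) (by rwa [hi]) bound
  refine ⟨col ⁻¹' {i} ∩ bound ⁻¹' Iic ξ, B \ Iio ξ, i, hξ.trans hi, ?_, ?_⟩
  · refine (mk_sdiff_eq_of_mk_lt (by rw [hB]; exact hlam.aleph0_le) ?_).trans hB
    rw [hB]; simpa using mk_Iio_lt ξ
  · rintro α ⟨rfl : col α = i, hαξ : bound α ≤ ξ⟩ β ⟨hβB, hβξ⟩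
    by_contra hne
    exact hβξ ((hbound α β ⟨hβB, hne⟩).trans_le hαξ)
end

section
/- Let λ be a regular infinite cardinal and μ a cardinal with 𝔯_λ < μ ≤ 2^λ and cf(μ) > 𝔯_λ. Then the strong polarized relation (μ,λ) → (μ,λ)^{1,1}_2 holds: for every c : μ × λ → 2 there exist H ⊆ μ with |H| = μ and a set C ⊆ λ with |C| = λ such that c is constant on H × C. -/
/-! A greedy transfinite recursion chooses, for each of `λ` given sets of size `λ`, `λ` pairs of
points in it, all distinct; collecting the first points of the pairs gives one set splitting
every given set, so `λ < 𝔯_λ`. Fix an unreaped family `F` of size `𝔯_λ`. For each row `α`,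
some `A ∈ F` is not split by `{β | c(α, β) = 1}`, so `c(α, ·)` is constant on `A` off a set of
size `< λ`, hence (`λ` regular) on `A` above some `ξ < λ`. The triple `(A, colour, ξ)` takes at
most `𝔯_λ · 2 · λ < cf μ` values, so by pigeonhole `μ` rows share it, and they are
monochromatic on `A ∩ [ξ, λ)`. -/

open Cardinal Set

universe u

section

variable {lam : Cardinal.{u}}

theorem mk_OT (c : Cardinal.{u}) : #(OT c) = c := by
  rw [mk_toType, card_ord]

theorem mk_Iio_OT_lt (x : OT lam) : #(Iio x) < lam := by
  simpa [mk_OT] using mk_Iio_lt x (by simp)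

theorem mk_set_OT_le (s : Set (OT lam)) : #s ≤ lam :=
  (mk_set_le s).trans_eq (mk_OT lam)

theorem exists_forall_lt_of_mk_lt_cof_s3 {s : Set (OT lam)} (hs : #s < lam.ord.cof) :
    ∃ ξ, ∀ β ∈ s, β < ξ := by
  have : ¬ IsCofinal s := fun h => (Order.cof_le h).not_gt (by rwa [Ordinal.cof_toType])
  simpa [IsCofinal] using this

theorem mk_inter_Ici_eq (hlam : ℵ₀ ≤ lam) {A : Set (OT lam)} (hA : #A = lam) (ξ : OT lam) :
    #(A ∩ Ici ξ : Set (OT lam)) = lam := by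
  refine le_antisymm (mk_set_OT_le _) (not_lt.1 fun h => ?_)
  have hcover : A ⊆ (A ∩ Ici ξ) ∪ Iio ξ := fun β hβ => (le_or_gt ξ β).imp (⟨hβ, ·⟩) id
  have := (mk_le_mk_of_subset hcover).trans (mk_union_le _ _)
  rw [hA] at this
  exact (add_lt_of_lt hlam h (mk_Iio_OT_lt ξ)).not_ge this

/-- Greedy recursion: the values chosen before `j` are fewer than `lam ≤ #(A j)`. -/
theorem exists_injective_forall_mem_OT {α : Type u} (A : OT lam → Set α)
    (hA : ∀ j, lam ≤ #(A j)) : ∃ g : OT lam → α, Function.Injective g ∧ ∀ j, g j ∈ A j := by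
  have fresh : ∀ j (s : Set α), #s < lam → (A j \ s).Nonempty := fun j s hs =>
    nonempty_iff_ne_empty.2 fun h =>
      ((hA j).trans (mk_le_mk_of_subset (sdiff_eq_empty.1 h))).not_gt hs
  let G : ∀ j, A j := wellFounded_lt.fix fun j IH =>
    let h := fresh j (range fun i : Iio j => (IH i i.2 : α))
      (mk_range_le.trans_lt (mk_Iio_OT_lt j))
    ⟨h.some, h.some_mem.1⟩
  have hG : ∀ j, (G j : α) ∉ range fun i : Iio j => (G i : α) := by
    intro j
    rw [show G j = _ from wellFounded_lt.fix_eq _ j]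
    exact (fresh _ _ (mk_range_le.trans_lt (mk_Iio_OT_lt j))).some_mem.2
  refine ⟨fun j => G j, fun i j hij => ?_, fun j => (G j).2⟩
  rcases lt_trichotomy i j with h | rfl | h
  · exact (hG j ⟨⟨i, h⟩, hij⟩).elim
  · rfl
  · exact (hG i ⟨⟨j, h⟩, hij.symm⟩).elim

theorem exists_injective_forall_mem {ι α : Type u} (hι : #ι = lam) (A : ι → Set α)
    (hA : ∀ i, lam ≤ #(A i)) : ∃ g : ι → α, Function.Injective g ∧ ∀ i, g i ∈ A i := by
  obtain ⟨e⟩ : Nonempty (ι ≃ OT lam) := Cardinal.eq.1 (hι.trans (mk_OT lam).symm)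
  obtain ⟨g, hg, hgA⟩ := exists_injective_forall_mem_OT (A ∘ e.symm) fun j => hA _
  exact ⟨g ∘ e, hg.comp e.injective, fun i => by simpa using hgA (e i)⟩

/-- With `g` injective on `(F × lam) ⊕ (F × lam)` and `g (_, (B, _)) ∈ B`, the set `S` is the
image of the left summand, while the image of the right summand meets each `B` outside `S`. -/
theorem exists_splits_of_mk_le (hlam : ℵ₀ ≤ lam) {F : Set (Set (OT lam))} (hF : #F ≤ lam)
    (hmem : ∀ B ∈ F, #B = lam) : ∃ S : Set (OT lam), #S = lam ∧ ∀ B ∈ F, Splits lam S B := by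
  rcases F.eq_empty_or_nonempty with rfl | hne
  · exact ⟨univ, by rw [mk_univ, mk_OT], by simp⟩
  have hJ : #((F × OT lam) ⊕ (F × OT lam)) = lam := by
    rw [mk_sum, mk_prod, lift_id, lift_id, lift_id, mk_OT,
      mul_eq_right hlam hF (mk_ne_zero_iff.2 hne.to_subtype), add_eq_self hlam]
  obtain ⟨g, hg, hgB⟩ := exists_injective_forall_mem hJ
    (Sum.elim (fun p : F × OT lam => (p.1 : Set (OT lam))) fun p => p.1)
    (Sum.rec (fun p => (hmem _ p.1.2).ge) fun p => (hmem _ p.1.2).ge)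
  have large : ∀ {t : Set (OT lam)} (f : OT lam → OT lam), Function.Injective f →
      (∀ ε, f ε ∈ t) → lam ≤ #t := fun f hf ht => by
    simpa [mk_range_eq f hf, mk_OT] using mk_le_mk_of_subset (range_subset_iff.2 ht)
  refine ⟨range (g ∘ Sum.inl), ?_, fun B hB => ⟨?_, ?_⟩⟩
  · rw [mk_range_eq _ (hg.comp Sum.inl_injective), mk_prod, lift_id, lift_id, mk_OT,
      mul_eq_right hlam hF (mk_ne_zero_iff.2 hne.to_subtype)]
  · refine le_antisymm (mk_set_OT_le _) (large (fun ε => g (.inl (⟨B, hB⟩, ε)))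
      (hg.comp (Sum.inl_injective.comp (Prod.mk_right_injective _))) fun ε =>
        ⟨mem_range_self _, hgB (.inl (⟨B, hB⟩, ε))⟩)
  · refine le_antisymm (mk_set_OT_le _) (large (fun ε => g (.inr (⟨B, hB⟩, ε)))
      (hg.comp (Sum.inr_injective.comp (Prod.mk_right_injective _))) fun ε =>
        ⟨hgB (.inr (⟨B, hB⟩, ε)), ?_⟩)
    rintro ⟨p, hp⟩
    exact Sum.inl_ne_inr (hg hp)

theorem isUnreaped_setOf_mk_eq (h0 : lam ≠ 0) : IsUnreaped lam {B | #B = lam} := by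
  refine ⟨fun B hB => hB, fun ⟨S, hS, hsplit⟩ => h0 ?_⟩
  simpa using (hsplit S hS).2.symm

theorem exists_isUnreaped_mk_eq_reapingNumber (h0 : lam ≠ 0) :
    ∃ F : Set (Set (OT lam)), #F = reapingNumber lam ∧ IsUnreaped lam F :=
  csInf_mem (s := {κ | ∃ F : Set (Set (OT lam)), #F = κ ∧ IsUnreaped lam F})
    ⟨_, _, rfl, isUnreaped_setOf_mk_eq h0⟩

theorem lt_reapingNumber (hlam : ℵ₀ ≤ lam) : lam < reapingNumber lam := by
  obtain ⟨F, hFr, hmem, hunsplit⟩ :=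
    exists_isUnreaped_mk_eq_reapingNumber (aleph0_pos.trans_le hlam).ne'
  exact hFr ▸ not_le.1 fun hF => hunsplit (exists_splits_of_mk_le hlam hF hmem)

theorem IsUnreaped.exists_mk_inter_lt_or_mk_diff_lt {F : Set (Set (OT lam))}
    (hF : IsUnreaped lam F) (B : Set (OT lam)) :
    ∃ A ∈ F, #(B ∩ A : Set _) < lam ∨ #(A \ B : Set _) < lam := by
  obtain ⟨A₀, hA₀⟩ : F.Nonempty :=
    nonempty_iff_ne_empty.2 fun h => hF.2 ⟨univ, by rw [mk_univ, mk_OT], by simp [h]⟩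
  by_contra! h
  refine hF.2 ⟨B, le_antisymm (mk_set_OT_le B)
    ((h A₀ hA₀).1.trans (mk_le_mk_of_subset inter_subset_left)), fun A hA => ?_⟩
  exact ⟨le_antisymm (mk_set_OT_le _) (h A hA).1, le_antisymm (mk_set_OT_le _) (h A hA).2⟩

theorem IsUnreaped.exists_eventually_const (hlam : lam.IsRegular) {F : Set (Set (OT lam))}
    (hF : IsUnreaped lam F) (c : OT lam → Fin 2) :
    ∃ A ∈ F, ∃ (i : Fin 2) (ξ : OT lam), ∀ β ∈ A, ξ ≤ β → c β = i := by
  obtain ⟨A, hA, hsmall⟩ := hF.exists_mk_inter_lt_or_mk_diff_lt (c ⁻¹' {1})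
  obtain ⟨i, hi⟩ : ∃ i, #{β ∈ A | c β ≠ i} < lam := by
    rcases hsmall with h | h
    · refine ⟨0, (mk_le_mk_of_subset ?_).trans_lt h⟩
      exact fun β hβ => ⟨Fin.eq_one_of_ne_zero _ hβ.2, hβ.1⟩
    · refine ⟨1, (mk_le_mk_of_subset ?_).trans_lt h⟩
      exact fun β hβ => ⟨hβ.1, hβ.2⟩
  obtain ⟨ξ, hξ⟩ := exists_forall_lt_of_mk_lt_cof_s3 (hi.trans_eq hlam.cof_ord.symm)
  exact ⟨A, hA, i, ξ, fun β hβ hle => by_contra fun hne => (hξ β ⟨hβ, hne⟩).not_ge hle⟩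

end

theorem stmt3_general (lam μ : Cardinal) (hlam : lam.IsRegular)
    (hcf : reapingNumber lam < μ.ord.cof) :
    StrongPolarized μ lam := by
  intro c
  obtain ⟨F, hFr, hF⟩ := exists_isUnreaped_mk_eq_reapingNumber hlam.pos.ne'
  have hlr := lt_reapingNumber hlam.aleph0_le
  have hcof : ℵ₀ ≤ μ.ord.cof := hlam.aleph0_le.trans (hlr.trans hcf).le
  choose A hAF i ξ hconst using fun α => hF.exists_eventually_const hlam (c α)
  let f : OT μ → F × ULift (Fin 2) × OT lam := fun α => (⟨A α, hAF α⟩, ⟨i α⟩, ξ α)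
  have hf : #(F × ULift (Fin 2) × OT lam) < μ.ord.cof := by
    simp only [mk_prod, lift_id, mk_uLift, mk_OT, hFr]
    exact mul_lt_of_lt hcof hcf (mul_lt_of_lt hcof (natCast_lt_aleph0.trans_le hcof)
      (hlr.trans hcf))
  obtain ⟨⟨A₀, i₀, ξ₀⟩, hfiber⟩ :=
    infinite_pigeonhole_card f μ (mk_OT μ).ge (hcof.trans (Ordinal.cof_ord_le μ)) hf
  refine ⟨f ⁻¹' {(A₀, i₀, ξ₀)}, A₀ ∩ Ici ξ₀, i₀.down, le_antisymm (mk_set_OT_le _) hfiber,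
    mk_inter_Ici_eq hlam.aleph0_le (hF.1 _ A₀.2) ξ₀, ?_⟩
  rintro α hα β ⟨hβA, hβξ⟩
  simp only [mem_preimage, mem_singleton_iff, f, Prod.ext_iff, Subtype.ext_iff] at hα
  obtain ⟨hA, rfl, rfl⟩ := hα
  exact hconst α β (hA ▸ hβA) hβξ

/-- upward positive relation above the reaping number. -/
theorem stmt3 (lam μ : Cardinal) (hlam : lam.IsRegular)
    (h1 : reapingNumber lam < μ) (h2 : μ ≤ 2 ^ lam)
    (hcf : reapingNumber lam < μ.ord.cof) :
    StrongPolarized μ lam :=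
  stmt3_general lam μ hlam hcf
end

section
/- Assume the Continuum Hypothesis. Then there exists a coloring c : ω₁ × ω → 2 such that for every uncountable A ⊆ ω₁ and every infinite B ⊆ ω, c is not constant on A × B; that is, (ℵ₁, ℵ₀) ↛ (ℵ₁, ℵ₀)^{1,1}_2. -/
open Cardinal Set

/-!
Under CH enumerate all subsets of `ℕ` as `(B_β)_{β < ω₁}`. For each `α < ω₁` only countably many
`B_β` with `β ≤ α` occur, and by the Baire category theorem in the Cantor space `ℕ → Fin 2` there
is a colouring `c_α` of `ℕ` taking both colours on each infinite one among them. An uncountable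
`A ⊆ ω₁` is cofinal, so for `B = B_β` some `α ∈ A` lies above `β`, and `c_α` is not constant on `B`.
-/

section Splitting

variable {X : Type*}

lemma isOpen_setOf_surjOn_univ (B : Set X) : IsOpen {f : X → Fin 2 | SurjOn f B univ} := by
  have : {f : X → Fin 2 | SurjOn f B univ} = ⋂ i, ⋃ a ∈ B, (fun f => f a) ⁻¹' {i} := by
    ext f
    simp [SurjOn, subset_def]
  rw [this]
  exact isOpen_iInter_of_finite fun i =>
    isOpen_biUnion fun a _ => (isOpen_discrete _).preimage (continuous_apply a)

lemma dense_setOf_surjOn_univ {B : Set X} (hB : B.Infinite) :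
    Dense {f : X → Fin 2 | SurjOn f B univ} := by
  classical
  refine dense_iff_inter_open.2 fun U hU ⟨f, hfU⟩ => ?_
  obtain ⟨I, u, hu, hIU⟩ := isOpen_pi_iff.1 hU f hfU
  obtain ⟨a, ha, b, hb, hab⟩ := (hB.sdiff I.finite_toSet).nontrivial
  refine ⟨fun x => if x = a then 0 else if x = b then 1 else f x, hIU fun x hx => ?_, ?_⟩
  · have hxa : x ≠ a := fun h => ha.2 (h ▸ hx)
    have hxb : x ≠ b := fun h => hb.2 (h ▸ hx)
    simpa [hxa, hxb] using (hu x hx).2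
  · intro i _
    fin_cases i
    · exact ⟨a, ha.1, by simp⟩
    · exact ⟨b, hb.1, by simp [hab.symm]⟩

theorem exists_surjOn_univ_of_countable {F : Set (Set X)} (hF : F.Countable)
    (hinf : ∀ B ∈ F, B.Infinite) : ∃ f : X → Fin 2, ∀ B ∈ F, SurjOn f B univ := by
  obtain ⟨f, hf⟩ := (dense_biInter_of_isOpen (fun B _ => isOpen_setOf_surjOn_univ B) hF
    fun B hB => dense_setOf_surjOn_univ (hinf B hB)).nonempty
  exact ⟨f, by simpa using hf⟩

end Splitting

open Function

lemma mk_Iio_ordToType_lt {c : Cardinal} (x : OT c) : #(Iio x) < c := by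
  simpa using mk_Iio_lt x (by simp)

lemma countable_Iic_aleph_one (x : OT ℵ₁) : (Iic x).Countable := by
  rw [← Iio_insert]
  exact (le_aleph0_iff_set_countable.1 (lt_aleph_one_iff.1 (mk_Iio_ordToType_lt x))).insert x

lemma exists_mem_le_of_mk_eq {c : Cardinal} {A : Set (OT c)} (hA : #A = c) (x : OT c) :
    ∃ y ∈ A, x ≤ y := by
  by_contra! h
  exact ((mk_le_mk_of_subset h).trans_lt (mk_Iio_ordToType_lt x)).ne hA

lemma two_power_aleph0_eq_aleph_one_univ (hCH : 2 ^ (ℵ₀ : Cardinal.{u}) = ℵ₁) :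
    2 ^ (ℵ₀ : Cardinal.{v}) = ℵ₁ := by
  rw [two_power_aleph0] at hCH ⊢
  rw [← lift_eq_aleph_one.{v, u}, lift_continuum, ← lift_continuum.{v, u}, hCH, lift_aleph]
  simp

lemma exists_surjective_aleph_one_set_nat (hCH : 2 ^ (ℵ₀ : Cardinal.{u}) = ℵ₁) :
    ∃ e : OT (ℵ₁ : Cardinal.{u}) → Set ℕ, Surjective e := by
  have : lift.{u} #(Set ℕ) ≤ lift.{0} #(OT (ℵ₁ : Cardinal.{u})) := by
    rw [mk_set, mk_nat, lift_power, lift_two, lift_aleph0, mk_ord_toType, lift_uzero, hCH]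
  obtain ⟨emb⟩ := lift_mk_le'.1 this
  exact ⟨invFun emb, invFun_surjective emb.injective⟩

/-- under CH there is a coloring of `ω₁ × ω` with no monochromatic
rectangle `A × B`, `A` uncountable, `B` infinite. -/
theorem stmt6 (hCH : 2 ^ ℵ₀ = aleph 1) :
    ∃ c : OT (aleph 1) → ℕ → Fin 2,
      ∀ (A : Set (OT (aleph 1))) (B : Set ℕ), #A = aleph 1 → B.Infinite →
        ¬ ∃ i : Fin 2, ∀ α ∈ A, ∀ n ∈ B, c α n = i := by
  obtain ⟨e, he⟩ :=
    exists_surjective_aleph_one_set_nat (two_power_aleph0_eq_aleph_one_univ hCH)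
  have hsplit (α : OT ℵ₁) : ∃ f : ℕ → Fin 2, ∀ β ≤ α, (e β).Infinite → SurjOn f (e β) univ := by
    have hF : (e '' Iic α ∩ {B | B.Infinite}).Countable :=
      ((countable_Iic_aleph_one α).image e).mono inter_subset_left
    obtain ⟨f, hf⟩ := exists_surjOn_univ_of_countable hF fun B hB => hB.2
    exact ⟨f, fun β hβ hinf => hf _ ⟨mem_image_of_mem e hβ, hinf⟩⟩
  choose c hc using hsplit
  refine ⟨c, fun A B hA hB ⟨i, hi⟩ => ?_⟩
  obtain ⟨β, rfl⟩ := he B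
  obtain ⟨α, hαA, hβα⟩ := exists_mem_le_of_mk_eq hA β
  obtain ⟨n, hn, hcn⟩ := hc α β hβα hB (mem_univ (i + 1))
  exact absurd ((hi α hαA n hn).symm.trans hcn) (by omega)
end
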